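/- For every n ≥ 0, the polynomial identity P_{n+1}(u; 0, 1) / u = (1/2^n) S_n(u; 0, 1, −1/2) holds; in particular, all coefficients of the polynomial (1/2^n) S_n(u; 0, 1, −1/2) are integers. -/
import Mathlib


open scoped BigOperators
open MeasureTheory

/-- Eulerian numbers `⟨n,k⟩`: number of permutations of `{1,…,n}` with `k` ascents,
via the recurrence `⟨n+1,k⟩ = (k+1)⟨n,k⟩ + (n−k+1)⟨n,k−1⟩`. -/
def eulerian : ℕ → ℕ → ℕ
  | 0, 0 => 1
  | 0, _ + 1 => 0
  | n + 1, 0 => eulerian n 0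
  | n + 1, k + 1 => (k + 2) * eulerian n (k + 1) + (n - k) * eulerian n k

/-- Derivative polynomial `P_n(u;a,b) = Σ_{k=0}^{n-2} ⟨n-1,k⟩ (u-a)^(k+1) (u-b)^(n-1-k)`
for `n ≥ 2`, with `P_1(u) = u - a`. -/
noncomputable def P (n : ℕ) (a b u : ℝ) : ℝ :=
  if n = 1 then u - a
  else ∑ k ∈ Finset.range (n - 1), (eulerian (n - 1) k : ℝ) * (u - a) ^ (k + 1) * (u - b) ^ (n - 1 - k)

/-- MacMahon numbers `M n k`: `M n 1 = 1`, `M n k = 0` outside `1 ≤ k ≤ n`, and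
`M n k = (2k−1) M (n−1) k + (2n−2k+1) M (n−1) (k−1)`. -/
def macmahon : ℕ → ℕ → ℕ
  | 0, _ => 0
  | 1, 1 => 1
  | 1, _ => 0
  | n + 2, 0 => 0
  | n + 2, k + 1 =>
      (2 * k + 1) * macmahon (n + 1) (k + 1) +
        (2 * (n + 2) - 2 * (k + 1) + 1) * macmahon (n + 1) k

/-- Derivative polynomial `Q_n(u;a,b) = Σ_{k=1}^{n+1} M_{n+1,k} (u-a)^(n+1-k) (u-b)^(k-1)`. -/
noncomputable def Q (n : ℕ) (a b u : ℝ) : ℝ :=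
  ∑ k ∈ Finset.Icc 1 (n + 1), (macmahon (n + 1) k : ℝ) * (u - a) ^ (n + 1 - k) * (u - b) ^ (k - 1)

/-- `S_n(u;a,b,d) = Σ_{k=0}^n C(n,k) (2d)^k Q_{n-k}(u;a,b)`. -/
noncomputable def S (n : ℕ) (a b d u : ℝ) : ℝ :=
  ∑ k ∈ Finset.range (n + 1), (n.choose k : ℝ) * (2 * d) ^ k * Q (n - k) a b u

open Polynomial Finset

lemma eulerian_eq_zero : ∀ n k : ℕ, n ≤ k → 0 < k → eulerian n k = 0
  | 0, k + 1, _, _ => rfl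
  | n + 1, k + 1, h, _ => by
    have h1 : n ≤ k := Nat.succ_le_succ_iff.mp h
    have h2 : eulerian n (k+1) = 0 := eulerian_eq_zero n (k+1) (h1.trans (Nat.le_succ k)) k.succ_pos
    simp [eulerian, h2, Nat.sub_eq_zero_of_le h1]

lemma macmahon_eq_zero : ∀ n k : ℕ, n < k → macmahon n k = 0
  | 0, _, _ => rfl
  | 1, 0, h => by omega
  | 1, 1, h => by omega
  | 1, _ + 2, _ => rfl
  | n + 2, 0, h => by omega
  | n + 2, k + 1, h => by
    have h1 : n + 1 < k + 1 := Nat.lt_of_succ_lt h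
    have h2 : n + 1 < k := Nat.lt_of_succ_lt_succ h
    simp [macmahon, macmahon_eq_zero (n+1) (k+1) h1, macmahon_eq_zero (n+1) k h2]

noncomputable section

/-- `TT a b = X^a (X-1)^b` -/
def TT (a b : ℕ) : Polynomial ℤ := X ^ a * (X - 1) ^ b

lemma dTT (a b : ℕ) : X * (X - 1) * derivative (TT a b) =
    (a : Polynomial ℤ) * TT a (b + 1) + (b : Polynomial ℤ) * TT (a + 1) b := by
  rcases a with _ | a <;> rcases b with _ | b <;>
      simp only [TT, pow_zero, one_mul, mul_one, derivative_one, derivative_mul, derivative_pow,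
        derivative_X, derivative_sub, derivative_one, Nat.cast_zero, Nat.cast_add, Nat.cast_one,
        Nat.add_sub_cancel, mul_zero, zero_mul, zero_add, add_zero, sub_zero, C_add, C_1, C_eq_natCast] <;>
    push_cast <;> ring

lemma twoX_TT (a b : ℕ) : (2 * X - 1) * TT a b = TT a (b + 1) + TT (a + 1) b := by
  simp [TT]; ring

lemma X_TT (a b : ℕ) : X * TT a b = TT (a + 1) b := by
  simp [TT, pow_succ]; ring

/-- `pr n = X * (P_{n+1}/u)` as integer polynomial -/
def pr (n : ℕ) : Polynomial ℤ :=
  ∑ k ∈ range (n + 1), (eulerian n k : Polynomial ℤ) * TT (k + 1) (n - k)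

def rr (n : ℕ) : Polynomial ℤ :=
  ∑ k ∈ range (n + 1), (eulerian n k : Polynomial ℤ) * TT k (n - k)

def qp (m : ℕ) : Polynomial ℤ :=
  ∑ j ∈ range (m + 1), (macmahon (m + 1) (j + 1) : Polynomial ℤ) * TT (m - j) j

def sp (n : ℕ) : Polynomial ℤ :=
  ∑ k ∈ range (n + 1), ((n.choose k : Polynomial ℤ) * (-1) ^ k) * qp (n - k)

lemma X_mul_rr (n : ℕ) : X * rr n = pr n := by
  simp only [rr, pr, Finset.mul_sum]
  exact Finset.sum_congr rfl fun k _ => by rw [mul_left_comm, X_TT]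

lemma prD (n : ℕ) : pr (n + 1) = X * (X - 1) * derivative (pr n) := by
  have rhs : X * (X - 1) * derivative (pr n) =
      ∑ k ∈ range (n + 1), (eulerian n k : Polynomial ℤ) *
        (((k : Polynomial ℤ) + 1) * TT (k + 1) (n - k + 1)
          + ((n - k : ℕ) : Polynomial ℤ) * TT (k + 2) (n - k)) := by
    rw [pr, derivative_sum, Finset.mul_sum]
    refine Finset.sum_congr rfl fun k _ => ?_
    rw [derivative_mul]
    simp only [derivative_natCast, zero_mul, zero_add]
    rw [mul_left_comm, dTT]
    push_cast
    ring
  rw [rhs]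
  have lhs : pr (n + 1) =
      (∑ k ∈ range (n + 1),
        (((k : Polynomial ℤ) + 2) * (eulerian n (k+1) : Polynomial ℤ)
          + ((n - k : ℕ) : Polynomial ℤ) * (eulerian n k : Polynomial ℤ)) * TT (k + 2) (n - k))
        + (eulerian n 0 : Polynomial ℤ) * TT 1 (n + 1) := by
    rw [pr, Finset.sum_range_succ']
    congr 1
    · refine Finset.sum_congr rfl fun k _ => ?_
      have : eulerian (n+1) (k+1) = (k + 2) * eulerian n (k + 1) + (n - k) * eulerian n k := rfl
      rw [Nat.succ_sub_succ, this]
      push_cast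
      ring
  rw [lhs]
  have split : (∑ k ∈ range (n + 1),
        (((k : Polynomial ℤ) + 2) * (eulerian n (k+1) : Polynomial ℤ)
          + ((n - k : ℕ) : Polynomial ℤ) * (eulerian n k : Polynomial ℤ)) * TT (k + 2) (n - k))
      = (∑ k ∈ range (n + 1),
          (((k : Polynomial ℤ) + 2) * (eulerian n (k+1) : Polynomial ℤ)) * TT (k + 2) (n - k))
        + ∑ k ∈ range (n + 1),
          (((n - k : ℕ) : Polynomial ℤ) * (eulerian n k : Polynomial ℤ)) * TT (k + 2) (n - k) := by
    rw [← Finset.sum_add_distrib]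
    exact Finset.sum_congr rfl fun k _ => by ring
  have key : (∑ k ∈ range (n + 1),
        (((k : Polynomial ℤ) + 2) * (eulerian n (k+1) : Polynomial ℤ)) * TT (k + 2) (n - k))
        + (eulerian n 0 : Polynomial ℤ) * TT 1 (n + 1)
      = ∑ k ∈ range (n + 1), (eulerian n k : Polynomial ℤ) *
          (((k : Polynomial ℤ) + 1) * TT (k + 1) (n - k + 1)) := by
    rw [Finset.sum_range_succ' (fun k => (eulerian n k : Polynomial ℤ) *
          (((k : Polynomial ℤ) + 1) * TT (k + 1) (n - k + 1)))]
    rw [Finset.sum_range_succ]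
    have hz : eulerian n (n + 1) = 0 := eulerian_eq_zero n (n+1) (Nat.le_succ n) n.succ_pos
    rw [hz, Nat.cast_zero, mul_zero, zero_mul, add_zero]
    congr 1
    · refine Finset.sum_congr rfl fun k hk => ?_
      have hk' : k < n := Finset.mem_range.mp hk
      have h2 : n - (k + 1) + 1 = n - k := by omega
      rw [h2]
      push_cast
      ring
    · rw [Nat.sub_zero]
      push_cast
      ring
  rw [split, add_right_comm, key, ← Finset.sum_add_distrib]
  exact Finset.sum_congr rfl fun k _ => by ring

lemma macmahon_zero_right : ∀ n : ℕ, macmahon n 0 = 0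
  | 0 => rfl
  | 1 => rfl
  | _ + 2 => rfl

lemma qpD (m : ℕ) : qp (m + 1) = 2 * (X * (X - 1)) * derivative (qp m) + (2 * X - 1) * qp m := by
  have rhs : 2 * (X * (X - 1)) * derivative (qp m) + (2 * X - 1) * qp m
      = ∑ j ∈ range (m + 1), (macmahon (m + 1) (j + 1) : Polynomial ℤ) *
          (((2 * (m - j) + 1 : ℕ) : Polynomial ℤ) * TT (m - j) (j + 1)
            + ((2 * j + 1 : ℕ) : Polynomial ℤ) * TT (m - j + 1) j) := by
    rw [qp, derivative_sum, Finset.mul_sum, Finset.mul_sum, ← Finset.sum_add_distrib]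
    refine Finset.sum_congr rfl fun j _ => ?_
    rw [derivative_mul]
    simp only [derivative_natCast, zero_mul, zero_add]
    calc 2 * (X * (X - 1)) * ((macmahon (m+1) (j+1) : Polynomial ℤ) * derivative (TT (m - j) j))
          + (2 * X - 1) * ((macmahon (m+1) (j+1) : Polynomial ℤ) * TT (m - j) j)
        = (macmahon (m+1) (j+1) : Polynomial ℤ) *
            (2 * (X * (X - 1) * derivative (TT (m - j) j)) + (2 * X - 1) * TT (m - j) j) := by
          ring
      _ = _ := by rw [dTT, twoX_TT]; push_cast; ring
  rw [rhs]
  have lhs : qp (m + 1) =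
      (∑ j ∈ range (m + 2), (((2 * j + 1) * macmahon (m+1) (j+1) : ℕ) : Polynomial ℤ) * TT (m + 1 - j) j)
      + ∑ j ∈ range (m + 2), (((2 * (m + 2) - 2 * (j + 1) + 1) * macmahon (m+1) j : ℕ) : Polynomial ℤ) * TT (m + 1 - j) j := by
    rw [qp, ← Finset.sum_add_distrib]
    refine Finset.sum_congr rfl fun j _ => ?_
    have : macmahon (m + 2) (j + 1)
        = (2 * j + 1) * macmahon (m+1) (j+1) + (2 * (m + 2) - 2 * (j + 1) + 1) * macmahon (m+1) j := rfl
    rw [this]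
    push_cast
    ring
  rw [lhs]
  have hS1 : (∑ j ∈ range (m + 2), (((2 * j + 1) * macmahon (m+1) (j+1) : ℕ) : Polynomial ℤ) * TT (m + 1 - j) j)
      = ∑ j ∈ range (m + 1), (macmahon (m + 1) (j + 1) : Polynomial ℤ) *
          (((2 * j + 1 : ℕ) : Polynomial ℤ) * TT (m - j + 1) j) := by
    rw [Finset.sum_range_succ]
    rw [macmahon_eq_zero (m+1) (m+2) (by omega)]
    simp only [Nat.mul_zero, Nat.cast_zero, zero_mul, add_zero]
    refine Finset.sum_congr rfl fun j hj => ?_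
    have hj' : j ≤ m := by have := Finset.mem_range.mp hj; omega
    have h1 : m + 1 - j = m - j + 1 := by omega
    rw [h1]
    push_cast
    ring
  have hS2 : (∑ j ∈ range (m + 2), (((2 * (m + 2) - 2 * (j + 1) + 1) * macmahon (m+1) j : ℕ) : Polynomial ℤ) * TT (m + 1 - j) j)
      = ∑ j ∈ range (m + 1), (macmahon (m + 1) (j + 1) : Polynomial ℤ) *
          (((2 * (m - j) + 1 : ℕ) : Polynomial ℤ) * TT (m - j) (j + 1)) := by
    rw [Finset.sum_range_succ']
    rw [macmahon_zero_right (m+1)]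
    simp only [Nat.mul_zero, Nat.cast_zero, zero_mul, add_zero]
    refine Finset.sum_congr rfl fun j hj => ?_
    have hj' : j ≤ m := by have := Finset.mem_range.mp hj; omega
    have h1 : m + 1 - (j + 1) = m - j := by omega
    have h2 : 2 * (m + 2) - 2 * (j + 1 + 1) + 1 = 2 * (m - j) + 1 := by omega
    rw [h1, h2]
    push_cast
    ring
  rw [hS1, hS2, ← Finset.sum_add_distrib]
  refine Finset.sum_congr rfl fun j _ => ?_
  ring

lemma qp_cast_succ (n k : ℕ) (h : k ≤ n) : qp (n - k + 1) = qp (n + 1 - k) := by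
  congr 1; omega

lemma spD (n : ℕ) : sp (n + 1) = 2 * (X * (X - 1)) * derivative (sp n) + (2 * X - 2) * sp n := by
  have hA : sp (n + 1)
      = (∑ k ∈ range (n + 1), ((n.choose k : Polynomial ℤ) * (-1) ^ k) * qp (n - k + 1)) - sp n := by
    rw [sp, Finset.sum_range_succ']
    have step : ∀ k ∈ range (n + 1),
        (((n+1).choose (k+1) : Polynomial ℤ) * (-1) ^ (k+1)) * qp (n + 1 - (k+1))
          = -(((n.choose (k+1) : Polynomial ℤ) * (-1) ^ k) * qp (n - k))
            - ((n.choose k : Polynomial ℤ) * (-1) ^ k) * qp (n - k) := by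
      intro k _
      rw [Nat.choose_succ_succ, Nat.succ_sub_succ]
      push_cast
      ring
    rw [Finset.sum_congr rfl step, Finset.sum_sub_distrib]
    have h2 : (∑ k ∈ range (n + 1), -(((n.choose (k+1) : Polynomial ℤ) * (-1) ^ k) * qp (n - k)))
        = (∑ k ∈ range (n + 1), ((n.choose k : Polynomial ℤ) * (-1) ^ k) * qp (n - k + 1))
          - qp (n + 1) := by
      rw [Finset.sum_range_succ' (fun k => ((n.choose k : Polynomial ℤ) * (-1) ^ k) * qp (n - k + 1))]
      have h3 : (∑ k ∈ range n, ((n.choose (k+1) : Polynomial ℤ) * (-1) ^ (k+1)) * qp (n - (k+1) + 1))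
          = ∑ k ∈ range n, -(((n.choose (k+1) : Polynomial ℤ) * (-1) ^ k) * qp (n - k)) := by
        refine Finset.sum_congr rfl fun k hk => ?_
        have hk' : k < n := Finset.mem_range.mp hk
        have : n - (k + 1) + 1 = n - k := by omega
        rw [this]
        push_cast
        ring
      rw [h3, Finset.sum_range_succ]
      have hz : (n.choose (n+1) : Polynomial ℤ) = 0 := by
        rw [Nat.choose_succ_self]; simp
      rw [hz]
      simp
    rw [h2]
    have hf0 : (((n+1).choose 0 : Polynomial ℤ) * (-1) ^ 0) * qp (n + 1 - 0) = qp (n + 1) := by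
      simp
    rw [hf0, sp]
    ring
  rw [hA]
  have hB : (∑ k ∈ range (n + 1), ((n.choose k : Polynomial ℤ) * (-1) ^ k) * qp (n - k + 1))
      = 2 * (X * (X - 1)) * derivative (sp n) + (2 * X - 1) * sp n := by
    rw [sp, derivative_sum, Finset.mul_sum, Finset.mul_sum, ← Finset.sum_add_distrib]
    refine Finset.sum_congr rfl fun k _ => ?_
    rw [qpD (n - k)]
    simp only [derivative_mul, derivative_natCast, derivative_pow, derivative_neg,
      derivative_one, neg_zero, mul_zero, zero_mul, zero_add, add_zero]
    ring
  rw [hB, sp]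
  ring

lemma main_id (n : ℕ) : X * sp n = ((2 ^ n : ℤ) : Polynomial ℤ) * pr n := by
  induction n with
  | zero =>
    have h1 : sp 0 = 1 := by
      rw [sp]
      simp [qp, TT]
      norm_num [macmahon]
    have h2 : pr 0 = X := by
      rw [pr]
      simp [TT]
      norm_num [eulerian]
    rw [h1, h2]
    simp
  | succ n ih =>
    have hd : derivative (X * sp n) = ((2 ^ n : ℤ) : Polynomial ℤ) * derivative (pr n) := by
      rw [ih, derivative_mul, derivative_intCast, zero_mul, zero_add]
    rw [derivative_mul, derivative_X, one_mul] at hd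
    rw [spD, prD]
    calc X * (2 * (X * (X - 1)) * derivative (sp n) + (2 * X - 2) * sp n)
        = 2 * (X * (X - 1)) * (sp n + X * derivative (sp n)) := by ring
      _ = 2 * (X * (X - 1)) * (((2 ^ n : ℤ) : Polynomial ℤ) * derivative (pr n)) := by rw [hd]
      _ = ((2 ^ (n + 1) : ℤ) : Polynomial ℤ) * (X * (X - 1) * derivative (pr n)) := by
          push_cast; ring

lemma sp_eq (n : ℕ) : sp n = ((2 ^ n : ℤ) : Polynomial ℤ) * rr n := by
  have h := main_id n
  rw [← X_mul_rr n, mul_left_comm] at h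
  exact mul_left_cancel₀ X_ne_zero h

lemma natDegree_rr_le (n : ℕ) : (rr n).natDegree ≤ n := by
  refine Polynomial.natDegree_sum_le_of_forall_le _ _ fun k hk => ?_
  have hk' : k ≤ n := by have := Finset.mem_range.mp hk; omega
  refine (Polynomial.natDegree_mul_le).trans ?_
  have h1 : ((eulerian n k : Polynomial ℤ)).natDegree = 0 := Polynomial.natDegree_natCast _
  have h2 : (TT k (n - k)).natDegree ≤ n := by
    refine (Polynomial.natDegree_mul_le).trans ?_
    have hx : (X ^ k : Polynomial ℤ).natDegree = k := Polynomial.natDegree_X_pow k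
    have hdeg : (X - 1 : Polynomial ℤ).natDegree = 1 := by
      simpa using Polynomial.natDegree_X_sub_C (1 : ℤ)
    have hy : ((X - 1 : Polynomial ℤ) ^ (n - k)).natDegree ≤ n - k := by
      rw [Polynomial.natDegree_pow, hdeg, mul_one]
    omega
  omega

lemma aeval_TT (u : ℝ) (a b : ℕ) : aeval u (TT a b) = u ^ a * (u - 1) ^ b := by
  simp [TT]

lemma aeval_qp (m : ℕ) (u : ℝ) : Q m 0 1 u = aeval u (qp m) := by
  rw [Q, qp, map_sum, ← Finset.Ico_add_one_right_eq_Icc, Finset.sum_Ico_eq_sum_range]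
  have hr : m + 1 + 1 - 1 = m + 1 := by omega
  rw [hr]
  refine Finset.sum_congr rfl fun j hj => ?_
  have hj' : j ≤ m := by have := Finset.mem_range.mp hj; omega
  rw [map_mul, map_natCast, aeval_TT]
  have h1 : 1 + j = j + 1 := by omega
  rw [h1]
  have h2 : m + 1 - (j + 1) = m - j := by omega
  have h3 : j + 1 - 1 = j := by omega
  rw [h2, h3, sub_zero]
  ring

lemma aeval_sp (n : ℕ) (u : ℝ) : S n 0 1 (-(1 / 2)) u = aeval u (sp n) := by
  rw [S, sp, map_sum]
  refine Finset.sum_congr rfl fun k _ => ?_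
  rw [map_mul, map_mul, map_natCast, map_pow, map_neg, map_one, aeval_qp]
  norm_num

lemma aeval_pr (n : ℕ) (u : ℝ) : P (n + 1) 0 1 u = aeval u (pr n) := by
  rcases n with _ | m
  · have h2 : pr 0 = X := by
      rw [pr]
      simp [TT]
      norm_num [eulerian]
    rw [h2]
    simp [P]
  · have hne : ¬ (m + 1 + 1 = 1) := by omega
    rw [P, if_neg hne, pr, map_sum]
    have hr : m + 1 + 1 - 1 = m + 1 := by omega
    rw [hr]
    rw [Finset.sum_range_succ (fun x => (aeval u)
      ((eulerian (m + 1) x : Polynomial ℤ) * TT (x + 1) (m + 1 - x))) (m + 1)]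
    rw [eulerian_eq_zero (m+1) (m+1) le_rfl (by omega)]
    simp only [Nat.cast_zero, zero_mul, map_zero, add_zero]
    refine Finset.sum_congr rfl fun k _ => ?_
    rw [map_mul, map_natCast, aeval_TT, sub_zero]
    ring


end

theorem P_div_u_eq_S (n : ℕ) :
    (∀ u : ℝ, P (n + 1) 0 1 u = u * ((1 / 2 ^ n : ℝ) * S n 0 1 (-(1 / 2)) u)) ∧
      ∃ c : ℕ → ℤ, ∀ u : ℝ,
        (1 / 2 ^ n : ℝ) * S n 0 1 (-(1 / 2)) u =
          ∑ k ∈ Finset.range (n + 1), (c k : ℝ) * u ^ k := by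
  have key : ∀ u : ℝ, (1 / 2 ^ n : ℝ) * S n 0 1 (-(1 / 2)) u = aeval u (rr n) := by
    intro u
    rw [aeval_sp, sp_eq, map_mul, map_intCast]
    push_cast
    rw [one_div, inv_mul_cancel_left₀ (by positivity)]
  constructor
  · intro u
    rw [aeval_pr, ← X_mul_rr, map_mul, aeval_X, key u]
  · refine ⟨fun k => (rr n).coeff k, fun u => ?_⟩
    rw [key u]
    rw [Polynomial.aeval_eq_sum_range' (Nat.lt_succ_of_le (natDegree_rr_le n)) u]
    refine Finset.sum_congr rfl fun k _ => ?_
    rw [zsmul_eq_mul]
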